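/- Let f: A → B be a formally smooth local homomorphism of noetherian local rings, C a complete noetherian local ring, and I ⊆ C an ideal. Then any pair of compatible continuous local homomorphisms A → C and B → C/I admits a lifting B → C making the square commute. -/

import Mathlib

/-!
Write `𝔪` for the maximal ideal of `C`. One builds maps `wₙ : B → C ⧸ 𝔪 ^ n` lifting `u` and
agreeing with `v` modulo `I + 𝔪 ^ n`, each reducing to the previous one. Given `wₙ`, the maps
`wₙ` and `v mod (I + 𝔪 ^ (n + 1))` glue to a map into `C ⧸ (𝔪 ^ n ∩ (I + 𝔪 ^ (n + 1)))`; as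
`I ⊆ 𝔪`, this ring is a square-zero quotient of `C ⧸ 𝔪 ^ (n + 1)`, and all maps involved are
killed by a power of the maximal ideals, so formal smoothness lifts it to `wₙ₊₁`. Completeness
of `C` turns `(wₙ)` into `w : B → C`, which lifts `u` and agrees with `v` modulo every `I + 𝔪 ^ n`.
By Krull's intersection theorem for the finite `C`-module `C ⧸ I`, the ideal `I` is `𝔪`-adically
closed, so `w` lifts `v`.
-/

universe u

/-- A local homomorphism `f : (A, mA) → (B, mB)` is formally smooth for the adic
topologies if for every ring `C` with a square-zero ideal `I` and compatible
homomorphisms `A → C`, `B → C/I` vanishing on large powers of the maximal ideals,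
there exists a lifting `B → C`. -/
def IsAdicFormallySmooth {A B : Type*} [CommRing A] [CommRing B]
    (mA : Ideal A) (mB : Ideal B) (f : A →+* B) : Prop :=
  ∀ (C : Type u) [CommRing C] (I : Ideal C), I ^ 2 = ⊥ →
    ∀ (u : A →+* C) (v : B →+* C ⧸ I),
      (∃ k : ℕ, ∀ a ∈ mA ^ k, u a = 0) →
      (∃ k : ℕ, ∀ b ∈ mB ^ k, v b = 0) →
      v.comp f = (Ideal.Quotient.mk I).comp u →
      ∃ w : B →+* C, w.comp f = u ∧ (Ideal.Quotient.mk I).comp w = v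

open Ideal Ideal.Quotient IsLocalRing

theorem exists_seq_of_forall_exists_succ {X : ℕ → Sort*} (P : ∀ n, X n → Prop)
    (R : ∀ n, X (n + 1) → X n → Prop) (x₀ : X 0) (h₀ : P 0 x₀)
    (step : ∀ n x, P n x → ∃ y, P (n + 1) y ∧ R n y x) :
    ∃ s : ∀ n, X n, ∀ n, P n (s n) ∧ R n (s (n + 1)) (s n) := by
  let t : ∀ n, {x : X n // P n x} := fun n =>
    Nat.rec ⟨x₀, h₀⟩ (fun n x => ⟨(step n x.1 x.2).choose, (step n x.1 x.2).choose_spec.1⟩) n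
  exact ⟨fun n => (t n).1, fun n => ⟨(t n).2, (step n (t n).1 (t n).2).choose_spec.2⟩⟩

namespace Ideal

variable {R : Type*} [CommRing R]

theorem sq_pow_inf_sup_pow_succ_le {I m : Ideal R} (hI : I ≤ m) (n : ℕ) :
    (m ^ n ⊓ (I ⊔ m ^ (n + 1))) ^ 2 ≤ m ^ (n + 1) :=
  calc (m ^ n ⊓ (I ⊔ m ^ (n + 1))) ^ 2 ≤ m ^ n * (I ⊔ m ^ (n + 1)) := by
        rw [sq]; exact mul_mono inf_le_left inf_le_right
    _ = m ^ n * I ⊔ m ^ n * m ^ (n + 1) := mul_sup _ _ _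
    _ ≤ m ^ (n + 1) := sup_le (pow_succ m n ▸ mul_mono_right hI) mul_le_right

theorem mem_of_forall_mem_sup_pow {I J : Ideal R} [IsHausdorff J (R ⧸ I)] {x : R}
    (h : ∀ n, x ∈ I ⊔ J ^ n) : x ∈ I := by
  rw [← eq_zero_iff_mem]
  refine IsHausdorff.haus ‹_› _ fun n => ?_
  rw [SModEq.zero, Ideal.smul_top_eq_map, Submodule.restrictScalars_mem, algebraMap_eq,
    mem_quotient_iff_mem_sup, sup_comm]
  exact h n

end Ideal

namespace Ideal.Quotient

variable {R S : Type*} [CommRing R] [CommRing S]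

theorem eq_of_factor_inf_eq {a b : Ideal R} {y y' : R ⧸ (a ⊓ b)}
    (ha : factor inf_le_left y = factor inf_le_left y')
    (hb : factor inf_le_right y = factor inf_le_right y') : y = y' := by
  obtain ⟨p, rfl⟩ := mk_surjective y
  obtain ⟨q, rfl⟩ := mk_surjective y'
  rw [factor_mk, factor_mk, Quotient.eq] at ha hb
  exact Quotient.eq.mpr ⟨ha, hb⟩

theorem ringHom_ext_inf {a b : Ideal R} {φ ψ : S →+* R ⧸ (a ⊓ b)}
    (ha : (factor inf_le_left).comp φ = (factor inf_le_left).comp ψ)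
    (hb : (factor inf_le_right).comp φ = (factor inf_le_right).comp ψ) : φ = ψ :=
  RingHom.ext fun x => eq_of_factor_inf_eq (RingHom.congr_fun ha x) (RingHom.congr_fun hb x)

theorem exists_factor_inf_eq {a b : Ideal R} {z₁ : R ⧸ a} {z₂ : R ⧸ b}
    (h : factor le_sup_left z₁ = factor (le_sup_right : b ≤ a ⊔ b) z₂) :
    ∃ z : R ⧸ (a ⊓ b), factor inf_le_left z = z₁ ∧ factor inf_le_right z = z₂ := by
  obtain ⟨p, rfl⟩ := mk_surjective z₁
  obtain ⟨q, rfl⟩ := mk_surjective z₂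
  rw [factor_mk, factor_mk, Quotient.eq] at h
  obtain ⟨p', hp', q', hq', hpq⟩ := Submodule.mem_sup.mp h
  refine ⟨mk _ (p - p'), ?_, ?_⟩ <;> rw [factor_mk, Quotient.eq]
  · simpa using hp'
  · convert hq' using 1
    linear_combination -hpq

theorem exists_ringHom_inf {a b : Ideal R} (g₁ : S →+* R ⧸ a) (g₂ : S →+* R ⧸ b)
    (h : (factor le_sup_left).comp g₁ = (factor (le_sup_right : b ≤ a ⊔ b)).comp g₂) :
    ∃ g : S →+* R ⧸ (a ⊓ b),
      (factor inf_le_left).comp g = g₁ ∧ (factor inf_le_right).comp g = g₂ := by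
  choose z hz₁ hz₂ using fun x => exists_factor_inf_eq (RingHom.congr_fun h x)
  refine ⟨{ toFun := z, map_one' := ?_, map_mul' := ?_, map_zero' := ?_, map_add' := ?_ },
    RingHom.ext hz₁, RingHom.ext hz₂⟩ <;> intros <;>
    exact eq_of_factor_inf_eq (by simp [hz₁]) (by simp [hz₂])

theorem eq_zero_of_mem_pow_of_map_le {J K : Ideal R} (φ : S →+* R ⧸ J) {a : Ideal S}
    (h : a.map φ ≤ K.map (mk J)) {k : ℕ} (hK : K ^ k ≤ J) : ∀ x ∈ a ^ k, φ x = 0 := by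
  intro x hx
  have : φ x ∈ (K ^ k).map (mk J) := by
    rw [Ideal.map_pow]
    exact Ideal.pow_right_mono h k (by simpa [Ideal.map_pow] using Ideal.mem_map_of_mem φ hx)
  rwa [(map_eq_bot_iff_le_ker _).mpr (by rwa [mk_ker]), Submodule.mem_bot] at this

theorem ringHom_ext_of_forall_factor_sup_pow {I J : Ideal R} [IsHausdorff J (R ⧸ I)]
    {φ ψ : S →+* R ⧸ I}
    (h : ∀ n, (factor (le_sup_left : I ≤ I ⊔ J ^ n)).comp φ = (factor le_sup_left).comp ψ) :
    φ = ψ := by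
  ext x
  obtain ⟨p, hp⟩ := mk_surjective (φ x)
  obtain ⟨q, hq⟩ := mk_surjective (ψ x)
  rw [← hp, ← hq, Ideal.Quotient.eq]
  refine mem_of_forall_mem_sup_pow (J := J) fun n => ?_
  have := RingHom.congr_fun (h n) x
  rwa [RingHom.comp_apply, RingHom.comp_apply, ← hp, ← hq, factor_mk, factor_mk,
    Ideal.Quotient.eq] at this

end Ideal.Quotient

section LocalHom

variable {B C : Type*} [CommRing B] [CommRing C] [IsLocalRing B] [IsLocalRing C] {I : Ideal C}

theorem mem_maximalIdeal_of_mk_eq (v : B →+* C ⧸ I) [IsLocalHom v] {b : B}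
    (hb : b ∈ maximalIdeal B) {y : C} (hy : mk I y = v b) : y ∈ maximalIdeal C := by
  by_contra hy'
  exact hb ((isUnit_map_iff v b).mp (hy ▸ (notMem_maximalIdeal.mp hy').map (mk I)))

theorem le_maximalIdeal_of_isLocalHom (v : B →+* C ⧸ I) [IsLocalHom v] : I ≤ maximalIdeal C :=
  fun y hy => mem_maximalIdeal_of_mk_eq v (zero_mem _) (by rwa [map_zero, eq_zero_iff_mem])

theorem map_maximalIdeal_le_of_factor_comp_eq (v : B →+* C ⧸ I) [IsLocalHom v] {J K : Ideal C}
    (hJK : J ≤ K) (hIK : I ≤ K) (hK : K ≤ maximalIdeal C) (φ : B →+* C ⧸ J)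
    (h : (factor hJK).comp φ = (factor hIK).comp v) :
    (maximalIdeal B).map φ ≤ (maximalIdeal C).map (mk J) := by
  rw [map_le_iff_le_comap]
  intro b hb
  obtain ⟨x, hx⟩ := mk_surjective (φ b)
  obtain ⟨y, hy⟩ := mk_surjective (v b)
  have hxy : x - y ∈ K := by
    have := RingHom.congr_fun h b
    rwa [RingHom.comp_apply, RingHom.comp_apply, ← hx, ← hy, factor_mk, factor_mk,
      Ideal.Quotient.eq] at this
  rw [mem_comap, ← hx]
  refine mem_map_of_mem _ ?_
  simpa using add_mem (hK hxy) (mem_maximalIdeal_of_mk_eq v hb hy)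

end LocalHom

section FormallySmooth

variable {A B : Type*} [CommRing A] [CommRing B] {mA : Ideal A} {mB : Ideal B} {f : A →+* B}

theorem IsAdicFormallySmooth.exists_lift_of_sq_le (hf : IsAdicFormallySmooth.{u} mA mB f)
    {D : Type u} [CommRing D] {L J : Ideal D} (hLJ : L ≤ J) (hJ : J ^ 2 ≤ L)
    (u : A →+* D ⧸ L) (g : B →+* D ⧸ J) (hu : ∃ k, ∀ a ∈ mA ^ k, u a = 0)
    (hg : ∃ k, ∀ b ∈ mB ^ k, g b = 0) (hcomp : g.comp f = (factor hLJ).comp u) :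
    ∃ w : B →+* D ⧸ L, w.comp f = u ∧ (factor hLJ).comp w = g := by
  let e := DoubleQuot.quotQuotEquivQuotOfLE hLJ
  have he : (e : _ →+* D ⧸ J).comp (mk (J.map (mk L))) = factor hLJ := by
    ext x
    exact DoubleQuot.quotQuotEquivQuotOfLE_quotQuotMk x hLJ
  have hsq : J.map (mk L) ^ 2 = ⊥ := by
    rw [← Ideal.map_pow, map_eq_bot_iff_le_ker, mk_ker]
    exact hJ
  obtain ⟨k, hk⟩ := hg
  obtain ⟨w, hwf, hwg⟩ := hf _ _ hsq u ((e.symm : D ⧸ J →+* _).comp g) hu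
    ⟨k, fun b hb => by simp [hk b hb]⟩ (by
      rw [RingHom.comp_assoc, hcomp, ← he]
      ext a
      simp)
  refine ⟨w, hwf, ?_⟩
  rw [← he, RingHom.comp_assoc, hwg, ← RingHom.comp_assoc]
  ext b
  simp

end FormallySmooth

section Tower

variable {A B C : Type*} [CommRing A] [CommRing B] [CommRing C]

def IsLiftModulo {I : Ideal C} (f : A →+* B) (u : A →+* C) (v : B →+* C ⧸ I) (J : Ideal C)
    (w : B →+* C ⧸ J) : Prop :=
  w.comp f = (mk J).comp u ∧
    (factor le_sup_right).comp w = (factor (le_sup_left : I ≤ I ⊔ J)).comp v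

theorem isLiftModulo_factor_comp {I J : Ideal C} {f : A →+* B} {u : A →+* C} {v : B →+* C ⧸ I}
    (hcomp : v.comp f = (mk I).comp u) (hIJ : I ≤ J) :
    IsLiftModulo f u v J ((factor hIJ).comp v) := by
  constructor
  · rw [RingHom.comp_assoc, hcomp, ← RingHom.comp_assoc, factor_comp_mk]
  · rw [← RingHom.comp_assoc, factor_comp]

end Tower

theorem IsAdicFormallySmooth.exists_isLiftModulo_succ {A B : Type*} {C : Type u}
    [CommRing A] [CommRing B] [CommRing C] [IsLocalRing A] [IsLocalRing B] [IsLocalRing C]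
    {f : A →+* B} (hf : IsAdicFormallySmooth.{u} (maximalIdeal A) (maximalIdeal B) f)
    {I : Ideal C} {u : A →+* C} {v : B →+* C ⧸ I} [IsLocalHom u] [IsLocalHom v]
    (hcomp : v.comp f = (mk I).comp u) {n : ℕ} {w : B →+* C ⧸ maximalIdeal C ^ n}
    (hw : IsLiftModulo f u v (maximalIdeal C ^ n) w) :
    ∃ w', IsLiftModulo f u v (maximalIdeal C ^ (n + 1)) w' ∧
      (factorPow _ n.le_succ).comp w' = w := by
  have hI : I ≤ maximalIdeal C := le_maximalIdeal_of_isLocalHom v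
  have hsup : maximalIdeal C ^ n ⊔ (I ⊔ maximalIdeal C ^ (n + 1)) = I ⊔ maximalIdeal C ^ n := by
    rw [sup_left_comm, sup_of_le_left (pow_le_pow_right n.le_succ :
      maximalIdeal C ^ (n + 1) ≤ maximalIdeal C ^ n)]
  obtain ⟨g, hg₁, hg₂⟩ := exists_ringHom_inf w ((factor le_sup_left).comp v) (by
    simpa only [← RingHom.comp_assoc, factor_comp] using congrArg ((factor hsup.ge).comp) hw.2)
  have hle : maximalIdeal C ^ (n + 1) ≤ maximalIdeal C ^ n ⊓ (I ⊔ maximalIdeal C ^ (n + 1)) :=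
    le_inf (pow_le_pow_right n.le_succ) le_sup_right
  have hu : ∀ a ∈ maximalIdeal A ^ (n + 1), (mk (maximalIdeal C ^ (n + 1))).comp u a = 0 := by
    refine eq_zero_of_mem_pow_of_map_le _ ?_ le_rfl
    rw [← map_map]
    exact map_mono (map_maximalIdeal_le u)
  have hg : ∀ b ∈ maximalIdeal B ^ (n + 1), g b = 0 :=
    eq_zero_of_mem_pow_of_map_le g (map_maximalIdeal_le_of_factor_comp_eq v inf_le_right le_sup_left
      (sup_le hI (pow_le_self n.succ_ne_zero)) g hg₂) hle
  have hgf : g.comp f = (factor hle).comp ((mk _).comp u) := by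
    apply ringHom_ext_inf
    · simp only [← RingHom.comp_assoc, hg₁, hw.1, factor_comp_mk]
    · rw [← RingHom.comp_assoc, hg₂, RingHom.comp_assoc, hcomp]
      simp only [← RingHom.comp_assoc, factor_comp_mk]
  obtain ⟨w', hw'f, hw'g⟩ := hf.exists_lift_of_sq_le hle (sq_pow_inf_sup_pow_succ_le hI n) _ g
    ⟨_, hu⟩ ⟨_, hg⟩ hgf
  refine ⟨w', ⟨hw'f, ?_⟩, ?_⟩
  · rw [← hg₂, ← hw'g, ← RingHom.comp_assoc, factor_comp]
  · rw [← hg₁, ← hw'g, ← RingHom.comp_assoc, factor_comp]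

theorem adic_lifting_of_formallySmooth {A B : Type*} {C : Type u}
    [CommRing A] [CommRing B] [CommRing C]
    [IsNoetherianRing C]
    [IsLocalRing A] [IsLocalRing B] [IsLocalRing C]
    [IsAdicComplete (IsLocalRing.maximalIdeal C) C]
    (f : A →+* B)
    (hf : IsAdicFormallySmooth.{u}
      (IsLocalRing.maximalIdeal A) (IsLocalRing.maximalIdeal B) f)
    (I : Ideal C) (u : A →+* C) (v : B →+* C ⧸ I)
    [IsLocalHom u] [IsLocalHom v]
    (hcomp : v.comp f = (Ideal.Quotient.mk I).comp u) :
    ∃ w : B →+* C, w.comp f = u ∧ (Ideal.Quotient.mk I).comp w = v := by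
  obtain ⟨w, hw⟩ := exists_seq_of_forall_exists_succ
    (fun n w => IsLiftModulo f u v (maximalIdeal C ^ n) w)
    (fun n w' w => (factorPow _ n.le_succ).comp w' = w)
    _ (isLiftModulo_factor_comp hcomp (by simp : I ≤ maximalIdeal C ^ 0))
    (fun _ _ hw => hf.exists_isLiftModulo_succ hcomp hw)
  have hmono {i j : ℕ} (hij : i ≤ j) : (factorPow _ hij).comp (w j) = w i :=
    IsAdicComplete.StrictMono.factorPow_comp_eq_of_factorPow_comp_succ_eq' strictMono_id w
      (hw _).2 hij
  let W := IsAdicComplete.liftRingHom _ w hmono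
  refine ⟨W, DFunLike.coe_injective <| IsHausdorff.funext' (maximalIdeal C) fun n a => ?_,
    ringHom_ext_of_forall_factor_sup_pow (J := maximalIdeal C) fun n => ?_⟩
  · simpa [W] using RingHom.congr_fun (hw n).1.1 a
  · rw [← (hw n).1.2, ← IsAdicComplete.mk_comp_liftRingHom _ w hmono n, ← RingHom.comp_assoc,
      ← RingHom.comp_assoc, factor_comp_mk, factor_comp_mk]
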